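/- arXiv:2204.13466 — 2 statements merged into one kernel-verified Lean document; each statement's English description precedes it below -/
import Mathlib

section
/- A network N is regular if and only if (i) for all vertices u, v of N it holds that C(u) ⊆ C(v) if and only if u ⪯_N v, and (ii) N is shortcut-free. -/
namespace PhyloNet

/-- A (rooted) network on a set `X` of taxa: a finite directed acyclic graph with a
unique vertex of indegree 0 (the root), whose vertices of outdegree 0 (the leaves)
are exactly the elements of `X` (via the injection `leafEmb`). -/
structure Network (X : Type) where
  V : Type
  [fintypeV : Fintype V]
  E : V → V → Prop
  leafEmb : X → V
  leafEmb_inj : Function.Injective leafEmb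
  acyclic : ∀ u v : V, E u v → ¬ Relation.ReflTransGen E v u
  root_unique : ∃! r : V, ∀ u : V, ¬ E u r
  leaf_iff : ∀ v : V, (∀ w : V, ¬ E v w) ↔ ∃ x : X, leafEmb x = v

attribute [instance] Network.fintypeV

variable {X : Type}

namespace Network

/-- `reach u v` : there is a directed path (possibly trivial) from `u` to `v`,
i.e. `v ⪯ u`. -/
def reach (N : Network X) : N.V → N.V → Prop := Relation.ReflTransGen N.E

/-- The cluster of a vertex: the set of leaves reachable from it. -/
def cluster (N : Network X) (v : N.V) : Set X := {x | N.reach v (N.leafEmb x)}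

/-- The clustering system of a network. -/
def CS (N : Network X) : Set (Set X) := Set.range N.cluster

noncomputable def inDeg (N : Network X) (v : N.V) : ℕ := {u | N.E u v}.ncard
noncomputable def outDeg (N : Network X) (v : N.V) : ℕ := {w | N.E v w}.ncard

def IsHybrid (N : Network X) (v : N.V) : Prop := 1 < N.inDeg v
def IsTreeVertex (N : Network X) (v : N.V) : Prop := N.inDeg v ≤ 1
def IsLeaf (N : Network X) (v : N.V) : Prop := ∀ w : N.V, ¬ N.E v w

/-- The arc `(u,w)` is a shortcut: `w ≺ v` for some child `v ≠ w` of `u`. -/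
def IsShortcut (N : Network X) (u w : N.V) : Prop :=
  N.E u w ∧ ∃ v : N.V, N.E u v ∧ v ≠ w ∧ N.reach v w

def ShortcutFree (N : Network X) : Prop := ∀ u w : N.V, ¬ N.IsShortcut u w

/-- Path-cluster comparability. -/
def PCC (N : Network X) : Prop :=
  ∀ u v : N.V, (N.reach u v ∨ N.reach v u) ↔
    (N.cluster u ⊆ N.cluster v ∨ N.cluster v ⊆ N.cluster u)

def SemiRegular (N : Network X) : Prop := N.ShortcutFree ∧ N.PCC

/-- `N` is regular iff `v ↦ C(v)` is a digraph isomorphism onto the Hasse diagram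
of `𝒞_N` (ordered by inclusion). -/
def Regular (N : Network X) : Prop :=
  Function.Injective N.cluster ∧
  ∀ u v : N.V, N.E u v ↔
    (N.cluster v ⊂ N.cluster u ∧
      ¬ ∃ w : N.V, N.cluster v ⊂ N.cluster w ∧ N.cluster w ⊂ N.cluster u)

def Separated (N : Network X) : Prop := ∀ v : N.V, N.IsHybrid v → N.outDeg v = 1

def Phylogenetic (N : Network X) : Prop := ¬ ∃ v : N.V, N.outDeg v = 1 ∧ N.inDeg v ≤ 1

def Binary (N : Network X) : Prop :=
  (∀ v : N.V, N.IsTreeVertex v → (N.IsLeaf v ∨ N.outDeg v = 2)) ∧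
  (∀ v : N.V, N.IsHybrid v → N.inDeg v = 2 ∧ N.outDeg v = 1)

def TreeChild (N : Network X) : Prop :=
  ∀ v : N.V, ¬ N.IsLeaf v → ∃ u : N.V, N.E v u ∧ N.inDeg u = 1

/-- The underlying undirected (simple) graph of a network. -/
def UG (N : Network X) : SimpleGraph N.V where
  Adj u v := u ≠ v ∧ (N.E u v ∨ N.E v u)
  symm := ⟨fun _ _ h => ⟨Ne.symm h.1, Or.symm h.2⟩⟩
  loopless := ⟨fun _ h => h.1 rfl⟩

/-- A set of vertices is biconnected if it induces a connected undirected graph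
with no cutvertex. -/
def IsBiconn (N : Network X) (B : Set N.V) : Prop :=
  (N.UG.induce B).Connected ∧ ∀ v ∈ B, (N.UG.induce (B \ {v})).Preconnected

/-- A block: a maximal biconnected set of vertices. -/
def IsBlock (N : Network X) (B : Set N.V) : Prop :=
  N.IsBiconn B ∧ ∀ B' : Set N.V, B ⊆ B' → N.IsBiconn B' → B' = B

/-- The set `B` contains an undirected cycle (`B` is a non-trivial block when it is
a block). -/
def HasCycleIn (N : Network X) (B : Set N.V) : Prop :=
  ∃ (v : N.V) (c : N.UG.Walk v v), c.IsCycle ∧ ∀ w ∈ c.support, w ∈ B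

/-- Level-1: each block contains at most one hybrid vertex that is not
`⪯`-maximal in the block. -/
def Level1 (N : Network X) : Prop :=
  ∀ B : Set N.V, N.IsBlock B →
    Set.Subsingleton {v : N.V | v ∈ B ∧ N.IsHybrid v ∧ ∃ u ∈ B, u ≠ v ∧ N.reach u v}

/-- The set `B` (with the edges of the underlying undirected graph between its
members) is exactly an undirected cycle. -/
def IsCycleSet (N : Network X) (B : Set N.V) : Prop :=
  ∃ (v : N.V) (c : N.UG.Walk v v), c.IsCycle ∧ (∀ w : N.V, w ∈ c.support ↔ w ∈ B) ∧
    ∀ u w : N.V, (N.UG.Adj u w ∧ u ∈ B ∧ w ∈ B) ↔ s(u, w) ∈ c.edges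

/-- A galled tree: every non-trivial block is an undirected cycle. -/
def GalledTree (N : Network X) : Prop :=
  ∀ B : Set N.V, N.IsBlock B → N.HasCycleIn B → N.IsCycleSet B

/-- Quasi-binary: hybrid vertices have indegree 2 and outdegree 1, and the
`⪯`-maximal vertex of every non-trivial block has outdegree 2. -/
def QuasiBinary (N : Network X) : Prop :=
  (∀ v : N.V, N.IsHybrid v → N.inDeg v = 2 ∧ N.outDeg v = 1) ∧
  ∀ B : Set N.V, N.IsBlock B → N.HasCycleIn B →
    ∀ v ∈ B, (∀ u ∈ B, N.reach u v → u = v) → N.outDeg v = 2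

/-- `LCA A`: the `⪯`-minimal vertices among the common ancestors of `A`. -/
def LCA (N : Network X) (A : Set X) : Set N.V :=
  {v : N.V | A ⊆ N.cluster v ∧ ∀ u : N.V, A ⊆ N.cluster u → N.reach v u → u = v}

/-- An lca-network: every nonempty set of leaves has a unique least common
ancestor. -/
def LcaNetwork (N : Network X) : Prop :=
  ∀ A : Set X, A.Nonempty → ∃ v : N.V, N.LCA A = {v}

/-- A strong lca-network. -/
def StrongLca (N : Network X) : Prop :=
  N.LcaNetwork ∧
  ∀ A : Set X, A.Nonempty → ∃ x ∈ A, ∃ y ∈ A, N.LCA ({x, y} : Set X) = N.LCA A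

/-- Cluster networks in the sense of Huson & Rupp. -/
def ClusterNetwork (N : Network X) : Prop :=
  N.PCC ∧
  (∀ u v : N.V, N.cluster u = N.cluster v ↔
    (u = v ∨ (N.IsHybrid v ∧ N.E v u) ∨ (N.IsHybrid u ∧ N.E u v))) ∧
  (∀ u v : N.V, N.E v u →
    ¬ ∃ w : N.V, N.cluster u ⊂ N.cluster w ∧ N.cluster w ⊂ N.cluster v) ∧
  (∀ v : N.V, N.IsHybrid v →
    ∃ u : N.V, N.E v u ∧ (∀ w : N.V, N.E v w → w = u) ∧ N.IsTreeVertex u)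

/-- The multiplicity of a cluster in the cluster multiset `𝓜_N`. -/
noncomputable def multiplicity (N : Network X) (C : Set X) : ℕ :=
  Nat.card {v : N.V // N.cluster v = C}

/-- Isomorphism of networks on the same leaf set `X`, fixing every leaf. -/
def Isomorphic (N N' : Network X) : Prop :=
  ∃ φ : N.V ≃ N'.V, (∀ u v : N.V, N.E u v ↔ N'.E (φ u) (φ v)) ∧
    ∀ x : X, φ (N.leafEmb x) = N'.leafEmb x

end Network

/-- A clustering system on `X`. -/
def IsClusteringSystem {X : Type} (𝒞 : Set (Set X)) : Prop :=
  ∅ ∉ 𝒞 ∧ Set.univ ∈ 𝒞 ∧ ∀ x : X, {x} ∈ 𝒞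

/-- Two sets overlap if `A ∩ B ∉ {∅, A, B}`. -/
def Overlap {X : Type} (A B : Set X) : Prop :=
  (A ∩ B).Nonempty ∧ A ∩ B ≠ A ∧ A ∩ B ≠ B

/-- Closed (under pairwise nonempty intersections). -/
def IsClosedCS {X : Type} (𝒞 : Set (Set X)) : Prop :=
  ∀ A ∈ 𝒞, ∀ B ∈ 𝒞, (A ∩ B).Nonempty → A ∩ B ∈ 𝒞

/-- Property (L). -/
def PropertyL {X : Type} (𝒞 : Set (Set X)) : Prop :=
  ∀ C₁ ∈ 𝒞, ∀ C₂ ∈ 𝒞, ∀ C₃ ∈ 𝒞, Overlap C₁ C₂ → Overlap C₁ C₃ → C₁ ∩ C₂ = C₁ ∩ C₃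

/-- Weak hierarchy. -/
def WeakHierarchy {X : Type} (𝒞 : Set (Set X)) : Prop :=
  ∀ C₁ ∈ 𝒞, ∀ C₂ ∈ 𝒞, ∀ C₃ ∈ 𝒞,
    C₁ ∩ C₂ ∩ C₃ = C₁ ∩ C₂ ∨ C₁ ∩ C₂ ∩ C₃ = C₁ ∩ C₃ ∨
    C₁ ∩ C₂ ∩ C₃ = C₂ ∩ C₃ ∨ C₁ ∩ C₂ ∩ C₃ = ∅

/-- Property (N3O): no three distinct pairwise overlapping clusters. -/
def N3O {X : Type} (𝒞 : Set (Set X)) : Prop :=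
  ¬ ∃ C₁ ∈ 𝒞, ∃ C₂ ∈ 𝒞, ∃ C₃ ∈ 𝒞,
    C₁ ≠ C₂ ∧ C₁ ≠ C₃ ∧ C₂ ≠ C₃ ∧ Overlap C₁ C₂ ∧ Overlap C₁ C₃ ∧ Overlap C₂ C₃

/-- Property (2-Inc). -/
def TwoInc {X : Type} (𝒞 : Set (Set X)) : Prop :=
  ∀ C ∈ 𝒞,
    {A : Set X | A ∈ 𝒞 ∧ A ⊂ C ∧ ∀ B ∈ 𝒞, B ⊂ C → A ⊆ B → A = B}.ncard ≤ 2 ∧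
    {A : Set X | A ∈ 𝒞 ∧ C ⊂ A ∧ ∀ B ∈ 𝒞, C ⊂ B → B ⊆ A → A = B}.ncard ≤ 2

/-- The intersection closure: all nonempty intersections of nonempty subfamilies. -/
def interClosure {X : Type} (𝒞 : Set (Set X)) : Set (Set X) :=
  {A : Set X | A.Nonempty ∧ ∃ S : Set (Set X), S ⊆ 𝒞 ∧ S.Nonempty ∧ A = ⋂₀ S}


/-
Under (i) the map `v ↦ C(v)` is an order embedding of `(V, ⪯)` into `(2^X, ⊆)`, so the Hasse
diagram of `𝒞_N` is the covering graph of `⪯`; in a DAG an arc `(u, v)` is a covering pair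
exactly when it is not a shortcut. Conversely, in a regular network every inclusion
`C(u) ⊊ C(v)` is refined by a maximal chain of Hasse arcs, i.e. of arcs of `N`, so (i) holds,
and a shortcut `(u, w)` via `v` would give `C(w) ⊊ C(v) ⊊ C(u)` against `(u, w)` being a
Hasse arc.
-/

namespace Network

open Relation

variable (N : Network X)

lemma transGen_irrefl (v : N.V) : ¬ TransGen N.E v v := by
  rw [TransGen.head'_iff]
  rintro ⟨w, hvw, hwv⟩
  exact N.acyclic v w hvw hwv

lemma transGen_iff_reach_and_not_reach {u v : N.V} :
    TransGen N.E u v ↔ N.reach u v ∧ ¬ N.reach v u := by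
  refine ⟨fun h => ⟨h.to_reflTransGen, fun h' => N.transGen_irrefl u (h.trans_left h')⟩,
    fun ⟨huv, hvu⟩ => ?_⟩
  rcases reflTransGen_iff_eq_or_transGen.1 huv with rfl | h
  · exact absurd ReflTransGen.refl hvu
  · exact h

lemma reach_antisymm {u v : N.V} (huv : N.reach u v) (hvu : N.reach v u) : u = v := by
  by_contra hne
  rcases reflTransGen_iff_eq_or_transGen.1 huv with h | h
  · exact hne h.symm
  · exact N.transGen_irrefl u (h.trans_left hvu)

lemma cluster_subset_of_reach {u v : N.V} (h : N.reach u v) : N.cluster v ⊆ N.cluster u :=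
  fun _ hx => h.trans hx

lemma isShortcut_iff {u v : N.V} (huv : N.E u v) :
    N.IsShortcut u v ↔ ∃ w, TransGen N.E u w ∧ TransGen N.E w v := by
  constructor
  · rintro ⟨-, w, huw, hwv, hreach⟩
    refine ⟨w, .single huw, ?_⟩
    rcases reflTransGen_iff_eq_or_transGen.1 hreach with h | h
    · exact absurd h.symm hwv
    · exact h
  · rintro ⟨w, huw, hwv⟩
    obtain ⟨c, huc, hcw⟩ := TransGen.head'_iff.1 huw
    have hcv : TransGen N.E c v := TransGen.trans_right hcw hwv
    refine ⟨huv, c, huc, ?_, hcv.to_reflTransGen⟩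
    rintro rfl
    exact N.transGen_irrefl c hcv

lemma ShortcutFree.e_iff_cover {N : Network X} (hsf : N.ShortcutFree) {u v : N.V} :
    N.E u v ↔ TransGen N.E u v ∧ ¬ ∃ w, TransGen N.E u w ∧ TransGen N.E w v := by
  refine ⟨fun huv => ⟨.single huv, fun h => hsf u v ((N.isShortcut_iff huv).2 h)⟩,
    fun ⟨huv, hcover⟩ => ?_⟩
  obtain ⟨c, huc, hcv⟩ := TransGen.head'_iff.1 huv
  rcases reflTransGen_iff_eq_or_transGen.1 hcv with rfl | hcv
  · exact huc
  · exact absurd ⟨c, .single huc, hcv⟩ hcover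

namespace Regular

variable {N}

lemma cluster_ssubset_of_transGen (hreg : N.Regular) {u v : N.V} (h : TransGen N.E u v) :
    N.cluster v ⊂ N.cluster u :=
  (N.cluster_subset_of_reach h.to_reflTransGen).ssubset_of_ne fun heq =>
    N.transGen_irrefl u (hreg.1 heq ▸ h)

lemma shortcutFree (hreg : N.Regular) : N.ShortcutFree := by
  intro u w hsc
  obtain ⟨v, huv, hvw⟩ := (N.isShortcut_iff hsc.1).1 hsc
  exact ((hreg.2 u w).1 hsc.1).2
    ⟨v, hreg.cluster_ssubset_of_transGen hvw, hreg.cluster_ssubset_of_transGen huv⟩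

lemma reach_of_cluster_subset (hreg : N.Regular) {u v : N.V}
    (h : N.cluster u ⊆ N.cluster v) : N.reach v u := by
  induction v using (Finite.wellFounded_of_trans_of_irrefl
    (InvImage (· ⊂ · : Set X → Set X → Prop) N.cluster)).induction with
  | _ v ih =>
  rcases h.eq_or_ssubset with heq | hss
  · exact hreg.1 heq ▸ ReflTransGen.refl
  -- a cluster maximal strictly between `C(u)` and `C(v)` is the cluster of a child of `v`
  obtain ⟨w, ⟨huw, hwv⟩, hmax⟩ :=
    (Set.toFinite {w | N.cluster u ⊆ N.cluster w ∧ N.cluster w ⊂ N.cluster v}).exists_maximalFor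
      N.cluster _ ⟨u, subset_rfl, hss⟩
  have hvw : N.E v w := (hreg.2 v w).2
    ⟨hwv, fun ⟨z, hwz, hzv⟩ => hwz.not_subset (hmax ⟨huw.trans hwz.subset, hzv⟩ hwz.subset)⟩
  exact .head hvw (ih w hwv huw)

end Regular

end Network

theorem regular_iff_clusterOrder_and_shortcutFree_general (X : Type)
    (N : Network X) :
    N.Regular ↔
      ((∀ u v : N.V, N.cluster u ⊆ N.cluster v ↔ N.reach v u) ∧ N.ShortcutFree) := by
  refine ⟨fun hreg => ⟨fun u v => ⟨hreg.reach_of_cluster_subset, N.cluster_subset_of_reach⟩,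
    hreg.shortcutFree⟩, fun ⟨hord, hsf⟩ => ⟨fun u v h => ?_, fun u v => ?_⟩⟩
  · exact N.reach_antisymm ((hord v u).1 h.ge) ((hord u v).1 h.le)
  · have hssubset : ∀ a b, N.cluster b ⊂ N.cluster a ↔ Relation.TransGen N.E a b := fun a b => by
      rw [ssubset_iff_subset_not_subset, hord, hord, N.transGen_iff_reach_and_not_reach]
    simp only [hssubset, hsf.e_iff_cover, and_comm (a := Relation.TransGen N.E _ v)]

/-- A network is regular iff (i) `C(u) ⊆ C(v) ↔ u ⪯ v` for all
vertices and (ii) it is shortcut-free. -/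
theorem regular_iff_clusterOrder_and_shortcutFree (X : Type) [Fintype X]
    (N : Network X) :
    N.Regular ↔
      ((∀ u v : N.V, N.cluster u ⊆ N.cluster v ↔ N.reach v u) ∧ N.ShortcutFree) :=
  regular_iff_clusterOrder_and_shortcutFree_general X N

end PhyloNet
end

section
/- For every clustering system 𝒞 on a finite set X there exists a regular network N on X with 𝒞_N = 𝒞, and N is unique in the sense that any regular network N' on X with 𝒞_{N'} = 𝒞 is isomorphic to N via a digraph isomorphism fixing every element of X. -/
namespace PhyloNet

variable {X : Type}

/-!
Regularity says that `v ↦ C(v)` identifies `N` with the covering relation of the poset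
`(𝒞_N, ⊆)`, so a regular network is determined by its clustering system. Conversely, the
Hasse diagram of a clustering system `𝒞` on a finite set is itself a network: `X` is its
unique maximal element, the singletons are exactly its minimal elements, and since `≤` in a
finite poset is the reflexive transitive closure of `⋖`, the cluster of `C ∈ 𝒞` is `C`.
-/

namespace Network

lemma cluster_leafEmb (N : Network X) (x : X) : N.cluster (N.leafEmb x) = {x} := by
  ext y
  refine ⟨fun h => ?_, fun h => h ▸ Relation.ReflTransGen.refl⟩
  rcases Relation.ReflTransGen.cases_head h with h | ⟨w, hw, -⟩
  · exact (N.leafEmb_inj h).symm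
  · exact absurd hw ((N.leaf_iff _).mpr ⟨x, rfl⟩ w)

lemma Regular.E_iff {N : Network X} (hN : N.Regular) (u v : N.V) :
    N.E u v ↔ N.cluster v ⊂ N.cluster u ∧
      ¬ ∃ D ∈ N.CS, N.cluster v ⊂ D ∧ D ⊂ N.cluster u := by
  rw [hN.2, CS, Set.exists_range_iff]

theorem Regular.isomorphic_of_CS_eq {N N' : Network X} (hN : N.Regular) (hN' : N'.Regular)
    (h : N.CS = N'.CS) : N.Isomorphic N' := by
  let φ : N.V ≃ N'.V := (Equiv.ofInjective _ hN.1).trans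
    ((Equiv.setCongr h).trans (Equiv.ofInjective _ hN'.1).symm)
  have hφ (u : N.V) : N'.cluster (φ u) = N.cluster u :=
    congrArg Subtype.val ((Equiv.ofInjective _ hN'.1).apply_symm_apply _)
  refine ⟨φ, fun u v => ?_, fun x => hN'.1 ?_⟩
  · rw [hN.E_iff, hN'.E_iff, hφ, hφ, h]
  · rw [hφ, cluster_leafEmb, cluster_leafEmb]

end Network

lemma reflTransGen_swap_covBy_iff {α : Type*} [PartialOrder α] [Finite α] {a b : α} :
    Relation.ReflTransGen (fun a b : α => b ⋖ a) a b ↔ b ≤ a := by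
  classical
  have : Fintype α := Fintype.ofFinite α
  have : LocallyFiniteOrder α := Fintype.toLocallyFiniteOrder
  exact Relation.reflTransGen_swap.trans le_iff_reflTransGen_covBy.symm

section Hasse

variable [Finite X] {𝒞 : Set (Set X)}

noncomputable def hasseNetwork (𝒞 : Set (Set X)) (h𝒞 : IsClusteringSystem 𝒞) :
    Network X where
  V := 𝒞
  fintypeV := Fintype.ofFinite 𝒞
  E u v := v ⋖ u
  leafEmb x := ⟨{x}, h𝒞.2.2 x⟩
  leafEmb_inj _ _ h := Set.singleton_injective (congrArg Subtype.val h)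
  acyclic _ _ huv hvu := huv.lt.not_ge (reflTransGen_swap_covBy_iff.mp hvu)
  root_unique := by
    refine ⟨⟨Set.univ, h𝒞.2.1⟩, fun u h => h.lt.not_ge (Set.subset_univ u.1), fun r hr => ?_⟩
    by_contra hne
    obtain ⟨c, hrc, -⟩ := exists_covBy_le_of_lt
      (lt_of_le_of_ne (show r ≤ ⟨Set.univ, h𝒞.2.1⟩ from Set.subset_univ r.1) hne)
    exact hr c hrc
  leaf_iff v := by
    refine ⟨fun hv => ?_, ?_⟩
    · obtain ⟨x, hx⟩ := Set.nonempty_iff_ne_empty.mpr fun he => h𝒞.1 (he ▸ v.2)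
      refine ⟨x, of_not_not fun hne => ?_⟩
      obtain ⟨c, -, hcv⟩ := exists_le_covBy_of_lt
        (lt_of_le_of_ne (show ⟨{x}, h𝒞.2.2 x⟩ ≤ v from Set.singleton_subset_iff.mpr hx) hne)
      exact hv c hcv
    · rintro ⟨x, rfl⟩ w hw
      exact h𝒞.1 (Set.ssubset_singleton_iff.mp hw.lt ▸ w.2)

variable (h𝒞 : IsClusteringSystem 𝒞)

lemma hasseNetwork_cluster : (hasseNetwork 𝒞 h𝒞).cluster = Subtype.val := by
  ext v x
  exact (reflTransGen_swap_covBy_iff (α := 𝒞)).trans Set.singleton_subset_iff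

lemma hasseNetwork_CS : (hasseNetwork 𝒞 h𝒞).CS = 𝒞 := by
  rw [Network.CS, hasseNetwork_cluster]
  exact Subtype.range_coe

lemma hasseNetwork_regular : (hasseNetwork 𝒞 h𝒞).Regular := by
  rw [Network.Regular, hasseNetwork_cluster]
  exact ⟨Subtype.val_injective, fun u v => by simp only [not_exists, not_and]; exact Iff.rfl⟩

end Hasse

/-- For every clustering system there is a regular network with this
clustering system, unique up to a digraph isomorphism fixing all leaves. -/
theorem exists_unique_regular_network (X : Type) [Fintype X] (𝒞 : Set (Set X))
    (h𝒞 : IsClusteringSystem 𝒞) :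
    ∃ N : Network X, N.Regular ∧ N.CS = 𝒞 ∧
      ∀ N' : Network X, N'.Regular → N'.CS = 𝒞 → N.Isomorphic N' := by
  refine ⟨hasseNetwork 𝒞 h𝒞, hasseNetwork_regular h𝒞, hasseNetwork_CS h𝒞,
    fun N' hN' hCS => (hasseNetwork_regular h𝒞).isomorphic_of_CS_eq hN' ?_⟩
  rw [hasseNetwork_CS, hCS]

end PhyloNet
end
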